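/- For every symmetric 2×2 matrix τ, every λ > 0, and every s ∈ (0,1], one has h_λ(sτ) ≤ C·s·h_λ(τ) for a universal constant C (one may take C = 2). -/

import Mathlib

/-!
On a symmetric matrix `τ`, `h_λ` depends only on `a = √λ`, `r = ρ⁽²⁾(τ)` and `m = |det τ|`,
since `|τ|² = r² - 2m`; under `τ ↦ sτ` these scale as `r ↦ sr`, `m ↦ s²m`. What remains is an
inequality between reals with `0 ≤ 4m ≤ r²` (AM-GM for the absolute eigenvalues), checked on the
three regions `a ≤ sr`, `sr < a ≤ r` and `r < a`, according to the branch of `h_λ` taken on each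
side.
-/

noncomputable def frob {n : ℕ} (τ : Matrix (Fin n) (Fin n) ℝ) : ℝ :=
  Real.sqrt (∑ i, ∑ j, (τ i j) ^ 2)

/-- `ρ⁽²⁾(τ) = |τ₁| + |τ₂|`, the sum of absolute values of eigenvalues. -/
noncomputable def rho2 (τ : Matrix (Fin 2) (Fin 2) ℝ) : ℝ :=
  if h : τ.IsHermitian then |h.eigenvalues 0| + |h.eigenvalues 1| else 0

/-- `H⁽²⁾(τ) = 2|τ₂|`, twice the largest absolute eigenvalue. -/
noncomputable def H2 (τ : Matrix (Fin 2) (Fin 2) ℝ) : ℝ :=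
  if h : τ.IsHermitian then 2 * max |h.eigenvalues 0| |h.eigenvalues 1| else 0

/-- the quasiconvexified integrand `h_λ` for `n = 2`. -/
noncomputable def hlam (lam : ℝ) (τ : Matrix (Fin 2) (Fin 2) ℝ) : ℝ :=
  if Real.sqrt lam ≤ rho2 τ then (frob τ) ^ 2 / Real.sqrt lam + Real.sqrt lam
  else 2 * (rho2 τ - |τ.det| / Real.sqrt lam)

open Matrix

section Spectral

lemma rho2_nonneg (τ : Matrix (Fin 2) (Fin 2) ℝ) : 0 ≤ rho2 τ := by
  unfold rho2
  split_ifs <;> positivity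

lemma abs_det_smul (τ : Matrix (Fin 2) (Fin 2) ℝ) (s : ℝ) : |(s • τ).det| = s ^ 2 * |τ.det| := by
  rw [det_smul, Fintype.card_fin, abs_mul, abs_pow, sq_abs]

variable {τ : Matrix (Fin 2) (Fin 2) ℝ}

lemma rho2_of_isHermitian (hτ : τ.IsHermitian) :
    rho2 τ = |hτ.eigenvalues 0| + |hτ.eigenvalues 1| :=
  dif_pos hτ

lemma trace_eq_add_eigenvalues (hτ : τ.IsHermitian) :
    τ.trace = hτ.eigenvalues 0 + hτ.eigenvalues 1 := by
  simpa [Fin.sum_univ_two] using hτ.trace_eq_sum_eigenvalues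

lemma det_eq_mul_eigenvalues (hτ : τ.IsHermitian) :
    τ.det = hτ.eigenvalues 0 * hτ.eigenvalues 1 := by
  simpa [Fin.prod_univ_two] using hτ.det_eq_prod_eigenvalues

lemma rho2_sq (hτ : τ.IsHermitian) :
    rho2 τ ^ 2 = τ.trace ^ 2 - 2 * τ.det + 2 * |τ.det| := by
  rw [rho2_of_isHermitian hτ, trace_eq_add_eigenvalues hτ, det_eq_mul_eigenvalues hτ, add_sq,
    sq_abs, sq_abs, abs_mul]
  ring

lemma four_mul_abs_det_le_rho2_sq (hτ : τ.IsHermitian) : 4 * |τ.det| ≤ rho2 τ ^ 2 := by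
  rw [rho2_of_isHermitian hτ, det_eq_mul_eigenvalues hτ, abs_mul]
  nlinarith [sq_nonneg (|hτ.eigenvalues 0| - |hτ.eigenvalues 1|)]

lemma frob_sq (hτ : τ.IsHermitian) : frob τ ^ 2 = rho2 τ ^ 2 - 2 * |τ.det| := by
  have hsymm : τ 1 0 = τ 0 1 := by simpa using hτ.apply 0 1
  rw [rho2_sq hτ, frob, Real.sq_sqrt (by positivity)]
  simp only [Fin.sum_univ_two, det_fin_two, trace_fin_two, hsymm]
  ring

lemma rho2_smul (hτ : τ.IsHermitian) {s : ℝ} (hs : 0 ≤ s) : rho2 (s • τ) = s * rho2 τ := by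
  have hsτ : (s • τ).IsHermitian := hτ.smul (IsSelfAdjoint.all s)
  rw [← pow_left_inj₀ (rho2_nonneg _) (mul_nonneg hs (rho2_nonneg τ)) two_ne_zero, rho2_sq hsτ,
    mul_pow, rho2_sq hτ, trace_smul, det_smul, Fintype.card_fin, abs_mul, abs_pow, sq_abs,
    smul_eq_mul]
  ring

end Spectral

noncomputable def hlamProfile (a r m : ℝ) : ℝ :=
  if a ≤ r then (r ^ 2 - 2 * m) / a + a else 2 * (r - m / a)

lemma hlam_eq_hlamProfile (lam : ℝ) {τ : Matrix (Fin 2) (Fin 2) ℝ} (hτ : τ.IsHermitian) :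
    hlam lam τ = hlamProfile (Real.sqrt lam) (rho2 τ) |τ.det| := by
  rw [hlam, hlamProfile, frob_sq hτ]

section Profile

variable {a r m s : ℝ}

lemma hlamProfile_scale_le_of_le_mul (ha : 0 < a) (hr : 0 ≤ r) (hm : 0 ≤ m)
    (hmr : 4 * m ≤ r ^ 2) (hs0 : 0 < s) (hs1 : s ≤ 1) (h : a ≤ s * r) :
    hlamProfile a (s * r) (s ^ 2 * m) ≤ 2 * s * hlamProfile a r m := by
  rw [hlamProfile, hlamProfile, if_pos h, if_pos (h.trans (mul_le_of_le_one_left hr hs1))]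
  have hF : 0 ≤ r ^ 2 - 2 * m := by linarith
  have ha2 : a ^ 2 ≤ 2 * s ^ 2 * (r ^ 2 - 2 * m) := by
    nlinarith [pow_le_pow_left₀ ha.le h 2]
  have hsF : s ^ 2 * (r ^ 2 - 2 * m) ≤ s * (r ^ 2 - 2 * m) := by
    have := mul_le_mul_of_nonneg_left hs1 hs0.le
    nlinarith
  field_simp
  -- if `2s ≥ 1` the term `a` is absorbed by `2sa`, otherwise `a² ≤ 2s²|τ|² ≤ s|τ|²`
  rcases le_total 1 (2 * s) with hs | hs
  · nlinarith
  · nlinarith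

lemma hlamProfile_scale_le_of_mul_lt_of_le (ha : 0 < a) (hm : 0 ≤ m) (hmr : 4 * m ≤ r ^ 2)
    (hs0 : 0 < s) (h₁ : s * r < a) (h₂ : a ≤ r) :
    hlamProfile a (s * r) (s ^ 2 * m) ≤ 2 * s * hlamProfile a r m := by
  rw [hlamProfile, hlamProfile, if_neg h₁.not_ge, if_pos h₂]
  field_simp
  nlinarith [sq_nonneg (r - 2 * a)]

lemma hlamProfile_scale_le_of_lt (ha : 0 < a) (hr : 0 ≤ r) (hm : 0 ≤ m) (hmr : 4 * m ≤ r ^ 2)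
    (hs0 : 0 < s) (hs1 : s ≤ 1) (h : r < a) :
    hlamProfile a (s * r) (s ^ 2 * m) ≤ 2 * s * hlamProfile a r m := by
  rw [hlamProfile, hlamProfile, if_neg h.not_ge,
    if_neg ((mul_le_of_le_one_left hr hs1).trans_lt h).not_ge]
  field_simp
  nlinarith [mul_le_mul_of_nonneg_left h.le hr]

lemma hlamProfile_scale_le (ha : 0 < a) (hr : 0 ≤ r) (hm : 0 ≤ m) (hmr : 4 * m ≤ r ^ 2)
    (hs0 : 0 < s) (hs1 : s ≤ 1) :
    hlamProfile a (s * r) (s ^ 2 * m) ≤ 2 * s * hlamProfile a r m := by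
  rcases le_or_gt a (s * r) with hsr | hsr
  · exact hlamProfile_scale_le_of_le_mul ha hr hm hmr hs0 hs1 hsr
  rcases le_or_gt a r with har | har
  · exact hlamProfile_scale_le_of_mul_lt_of_le ha hm hmr hs0 hsr har
  · exact hlamProfile_scale_le_of_lt ha hr hm hmr hs0 hs1 har

end Profile

/-- for every symmetric `2×2` matrix `τ`, every `λ > 0` and `s ∈ (0,1]`,
`h_λ(sτ) ≤ 2 s h_λ(τ)`. -/
theorem hlam_smul_le (lam : ℝ) (hlam_pos : 0 < lam) (τ : Matrix (Fin 2) (Fin 2) ℝ)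
    (hτ : τ.IsHermitian) (s : ℝ) (hs0 : 0 < s) (hs1 : s ≤ 1) :
    hlam lam (s • τ) ≤ 2 * s * hlam lam τ := by
  rw [hlam_eq_hlamProfile lam (hτ.smul (IsSelfAdjoint.all s)), hlam_eq_hlamProfile lam hτ,
    rho2_smul hτ hs0.le, abs_det_smul]
  exact hlamProfile_scale_le (Real.sqrt_pos.mpr hlam_pos) (rho2_nonneg τ) (abs_nonneg _)
    (four_mul_abs_det_le_rho2_sq hτ) hs0 hs1
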